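/- Let λ ∈ (0,1) be irrational with convergents p_m/q_m and fix positive integers p, q with η = p − qλ, −λ < η < 1. Let T(x) = x + λ for x < 0, T(x) = x − 1 for x > 0, T(0) = −η on [−1,λ). If (m₀, n₀) is the largest pair (in the ordering by w_λ) of semiconvergent indices with P_{m₀,n₀} < p or Q_{m₀,n₀} < q, then for every pair (m,n) with w_λ(m,n) > w_λ(m₀,n₀), T^{h_{m,n}}(0) = Δ_{m,n}(λ), where h_{m,n} = (Q_{m,n} − q) + (P_{m,n} − p) + 1 and Δ_{m,n}(λ) = Q_{m,n}λ − P_{m,n}. -/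

import Mathlib

noncomputable section

/-- The Gauss map `g(x) = 1/x - ⌊1/x⌋`. -/
def gaussMap (x : ℝ) : ℝ := 1 / x - ⌊(1 : ℝ) / x⌋

/-- `cfA lam k` is the continued fraction coefficient `λ_{k+1}` of `lam = [0; λ₁, λ₂, ...]`,
i.e. `λ_{k+1} = ⌊1 / g^k(lam)⌋`. -/
def cfA (lam : ℝ) (k : ℕ) : ℤ := ⌊1 / (gaussMap^[k] lam)⌋

/-- Shifted convergent numerators: `num lam (m+1) = p_m`, with `num lam 0 = p_{-1} = 1`. -/
def num (lam : ℝ) : ℕ → ℤ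
  | 0 => 1
  | 1 => 0
  | m + 2 => cfA lam m * num lam (m + 1) + num lam m

/-- Shifted convergent denominators: `den lam (m+1) = q_m`, with `den lam 0 = q_{-1} = 0`. -/
def den (lam : ℝ) : ℕ → ℤ
  | 0 => 0
  | 1 => 1
  | m + 2 => cfA lam m * den lam (m + 1) + den lam m

/-- Semiconvergent numerator `P_{m,n}`: `P_{m,0} = p_m` and `P_{m,n} = n·p_m + p_{m-1}` for `n ≥ 1`. -/
def Ps (lam : ℝ) (m n : ℕ) : ℤ :=
  if n = 0 then num lam (m + 1) else n * num lam (m + 1) + num lam m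

/-- Semiconvergent denominator `Q_{m,n}`: `Q_{m,0} = q_m` and `Q_{m,n} = n·q_m + q_{m-1}` for `n ≥ 1`. -/
def Qs (lam : ℝ) (m n : ℕ) : ℤ :=
  if n = 0 then den lam (m + 1) else n * den lam (m + 1) + den lam m

/-- The semiconvergent error `Δ_{m,n}(λ) = Q_{m,n}·λ − P_{m,n}`. -/
def Del (lam : ℝ) (m n : ℕ) : ℝ := (Qs lam m n : ℝ) * lam - (Ps lam m n : ℝ)

/-- The error `Δ_{m-1,0}(λ) = q_{m-1}·λ − p_{m-1}` (with `Δ_{-1,0} = −1` for `m = 0`). -/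
def DelPrev (lam : ℝ) (m : ℕ) : ℝ := (den lam m : ℝ) * lam - (num lam m : ℝ)

/-- The indexing function `w_λ(m,n)`: equal to `n` if `m = 0` and to `λ₁ + ... + λ_m + n`
otherwise. -/
def wIdx (lam : ℝ) (m n : ℕ) : ℤ :=
  if m = 0 then (n : ℤ) else (∑ k ∈ Finset.range m, cfA lam k) + n

/-- The baseline interval map `T` on `[−1, λ)`: `T(x) = x + λ` for `x < 0`, `T(x) = x − 1` for
`x > 0`, and `T(0) = −η`. -/
def Tmap (lam eta : ℝ) (x : ℝ) : ℝ :=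
  if x < 0 then x + lam else if 0 < x then x - 1 else -eta

/-! The orbit of `0` never returns to `0` (λ is irrational) and stays in the open interval
`(-1, λ)`; each step adds `λ` or subtracts `1`, so `T^{t+1}(0) = Aλ - B` with
`A + B = p + q + t`. The classical formula `q_kλ - p_k = (-1)^(k+1) x_0 ⋯ x_{k-1}`, with `x_i`
the Gauss-map iterates of `λ`, shows that `Δ_{m,n}` also lies in `(-1, λ)`, and once
`P_{m,n} ≥ p`, `Q_{m,n} ≥ q` it has the same form with `t = h_{m,n} - 1`. Two numbers `Aλ - B`,
`A'λ - B'` with `A + B = A' + B'` differ by an integer multiple of `1 + λ`, the length of the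
interval, so they coincide. -/

open Function Set

lemma gaussMap_eq_fract (x : ℝ) : gaussMap x = Int.fract (1 / x) := rfl

lemma irrational_gaussMap {x : ℝ} (hx : Irrational x) : Irrational (gaussMap x) := by
  rw [gaussMap_eq_fract, Int.fract, one_div]
  exact hx.inv.sub_intCast _

lemma gaussMap_mem_Ioo {x : ℝ} (hx : Irrational x) : gaussMap x ∈ Ioo 0 1 :=
  ⟨(Int.fract_nonneg _).lt_of_ne (irrational_gaussMap hx).ne_zero.symm, Int.fract_lt_one _⟩

lemma irrational_iterate_gaussMap {x : ℝ} (hx : Irrational x) (k : ℕ) :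
    Irrational (gaussMap^[k] x) := by
  induction k with
  | zero => exact hx
  | succ k ih => rw [iterate_succ_apply']; exact irrational_gaussMap ih

lemma iterate_gaussMap_mem_Ioo {x : ℝ} (hx : x ∈ Ioo 0 1) (hirr : Irrational x) (k : ℕ) :
    gaussMap^[k] x ∈ Ioo 0 1 := by
  cases k with
  | zero => exact hx
  | succ k =>
    rw [iterate_succ_apply']
    exact gaussMap_mem_Ioo (irrational_iterate_gaussMap hirr k)

section ContinuedFraction

variable {lam : ℝ}

lemma cfA_mul_iterate_gaussMap_le_one {k : ℕ} (hk : 0 < gaussMap^[k] lam) :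
    (cfA lam k : ℝ) * gaussMap^[k] lam ≤ 1 := by
  calc (cfA lam k : ℝ) * gaussMap^[k] lam ≤ (1 / gaussMap^[k] lam) * gaussMap^[k] lam := by
        gcongr; exact Int.floor_le _
    _ = 1 := one_div_mul_cancel hk.ne'

lemma iterate_gaussMap_mul_succ {k : ℕ} (hk : gaussMap^[k] lam ≠ 0) :
    gaussMap^[k] lam * gaussMap^[k + 1] lam = 1 - cfA lam k * gaussMap^[k] lam := by
  rw [iterate_succ_apply', gaussMap]
  field_simp
  rfl

/-- `x_0 x_1 ⋯ x_{k-1}`, the product of the first `k` Gauss-map iterates `x_i = g^i(λ)`. -/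
def gaussProd (lam : ℝ) (k : ℕ) : ℝ := ∏ i ∈ Finset.range k, gaussMap^[i] lam

lemma gaussProd_succ (lam : ℝ) (k : ℕ) :
    gaussProd lam (k + 1) = gaussProd lam k * gaussMap^[k] lam :=
  Finset.prod_range_succ _ _

lemma delPrev_eq_gaussProd (hirr : Irrational lam) (k : ℕ) :
    DelPrev lam k = (-1) ^ (k + 1) * gaussProd lam k := by
  induction k using Nat.twoStepInduction with
  | zero => simp [DelPrev, gaussProd, den, num]
  | one => simp [DelPrev, gaussProd, den, num]
  | more k ih ih1 =>
    have hrec : DelPrev lam (k + 2) = cfA lam k * DelPrev lam (k + 1) + DelPrev lam k := by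
      simp only [DelPrev, den, num]
      push_cast
      ring
    have hprod := iterate_gaussMap_mul_succ (irrational_iterate_gaussMap hirr k).ne_zero
    rw [hrec, ih1, ih]
    simp only [gaussProd_succ]
    linear_combination (-1) ^ k * gaussProd lam k * hprod

variable (h : lam ∈ Ioo 0 1) (hirr : Irrational lam)
include h hirr

lemma gaussProd_pos (k : ℕ) : 0 < gaussProd lam k :=
  Finset.prod_pos fun i _ => (iterate_gaussMap_mem_Ioo h hirr i).1

lemma strictAnti_gaussProd : StrictAnti (gaussProd lam) := by
  refine strictAnti_nat_of_succ_lt fun k => ?_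
  rw [gaussProd_succ]
  exact mul_lt_of_lt_one_right (gaussProd_pos h hirr k) (iterate_gaussMap_mem_Ioo h hirr k).2

lemma gaussProd_le_lam {k : ℕ} (hk : 1 ≤ k) : gaussProd lam k ≤ lam := by
  simpa [gaussProd] using (strictAnti_gaussProd h hirr).antitone hk

end ContinuedFraction

lemma neg_one_pow_mul_mem_Ioo {lam y : ℝ} (hlam : 0 < lam) (k : ℕ) (hy0 : 0 < y) (hy1 : y < 1)
    (hylam : Even k → y < lam) : (-1) ^ k * y ∈ Ioo (-1) lam := by
  rcases k.even_or_odd with hk | hk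
  · rw [hk.neg_one_pow, one_mul]
    exact ⟨by linarith, hylam hk⟩
  · rw [hk.neg_one_pow]
    constructor <;> linarith

lemma del_mem_Ioo {lam : ℝ} (h : lam ∈ Ioo 0 1) (hirr : Irrational lam) {m n : ℕ}
    (hmn : (n : ℤ) < cfA lam m) (hne : m ≠ 0 ∨ n ≠ 0) : Del lam m n ∈ Ioo (-1) lam := by
  have hx := iterate_gaussMap_mem_Ioo h hirr m
  have hβ := gaussProd_pos h hirr m
  have hβ1 : gaussProd lam m ≤ 1 := by
    simpa [gaussProd] using (strictAnti_gaussProd h hirr).antitone m.zero_le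
  rcases eq_or_ne n 0 with rfl | hn
  · obtain ⟨k, rfl⟩ : ∃ k, m = k + 1 := Nat.exists_eq_succ_of_ne_zero (by simpa using hne)
    have hDel : Del lam (k + 1) 0 = (-1) ^ (k + 3) * gaussProd lam (k + 2) := by
      rw [← delPrev_eq_gaussProd hirr]
      simp [Del, Ps, Qs, DelPrev]
    have hlt : gaussProd lam (k + 2) < lam := by
      simpa [gaussProd] using strictAnti_gaussProd h hirr (show 1 < k + 2 by omega)
    rw [hDel]
    exact neg_one_pow_mul_mem_Ioo h.1 _ (gaussProd_pos h hirr _) (by linarith [h.2])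
      fun _ => hlt
  · -- `Δ_{m,n} = (-1)^(m+1) x_0 ⋯ x_{m-1} (1 - n x_m)`, and `0 < n x_m ≤ 1 - x_m` as `n < λ_{m+1}`.
    have hDel : Del lam m n =
        (-1) ^ (m + 1) * (gaussProd lam m * (1 - n * gaussMap^[m] lam)) := by
      have : Del lam m n = n * DelPrev lam (m + 1) + DelPrev lam m := by
        simp only [Del, Ps, Qs, DelPrev, if_neg hn]
        push_cast
        ring
      rw [this, delPrev_eq_gaussProd hirr, delPrev_eq_gaussProd hirr, gaussProd_succ]
      ring
    have hn1 : (1 : ℝ) ≤ n := by exact_mod_cast Nat.one_le_iff_ne_zero.mpr hn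
    have hna : (n : ℝ) + 1 ≤ cfA lam m := by exact_mod_cast hmn
    have hax := cfA_mul_iterate_gaussMap_le_one hx.1
    have hnx : (n : ℝ) * gaussMap^[m] lam ≤ 1 - gaussMap^[m] lam := by nlinarith [hx.1]
    have hlt : gaussProd lam m * (1 - n * gaussMap^[m] lam) < gaussProd lam m := by
      nlinarith [mul_pos hβ (mul_pos (by linarith : (0 : ℝ) < n) hx.1)]
    rw [hDel]
    refine neg_one_pow_mul_mem_Ioo h.1 _ (by nlinarith [hx.1]) (by linarith) fun hev => ?_
    have hm : 1 ≤ m := Nat.one_le_iff_ne_zero.mpr (by rintro rfl; exact Nat.not_even_one hev)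
    linarith [gaussProd_le_lam h hirr hm]

section Orbit

variable {lam eta : ℝ}

lemma Tmap_of_neg {x : ℝ} (hx : x < 0) : Tmap lam eta x = x + lam := if_pos hx

lemma Tmap_of_pos {x : ℝ} (hx : 0 < x) : Tmap lam eta x = x - 1 := by
  rw [Tmap, if_neg hx.not_gt, if_pos hx]

lemma exists_iterate_Tmap_zero_eq (hlam : 0 < lam) (hirr : Irrational lam) {p q : ℕ}
    (hq : 0 < q) (heta : eta = (p : ℝ) - (q : ℝ) * lam) (heta1 : -lam < eta) (heta2 : eta < 1)
    (t : ℕ) :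
    ∃ A B : ℕ, q ≤ A ∧ A + B = q + p + t ∧
      (Tmap lam eta)^[t + 1] 0 = A * lam - B ∧ (Tmap lam eta)^[t + 1] 0 ∈ Ioo (-1) lam := by
  induction t with
  | zero =>
    refine ⟨q, p, le_rfl, rfl, ?_, ?_⟩ <;> simp only [zero_add, iterate_one, Tmap, lt_irrefl,
      if_false]
    · rw [heta]; ring
    · constructor <;> linarith
  | succ t ih =>
    obtain ⟨A, B, hqA, hAB, hx, hmem⟩ := ih
    rw [iterate_succ_apply', hx]
    rw [hx] at hmem
    have hne : (A : ℝ) * lam - B ≠ 0 := ((hirr.natCast_mul (by omega)).sub_natCast B).ne_zero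
    rcases hne.lt_or_gt with hneg | hpos
    · rw [Tmap_of_neg hneg]
      refine ⟨A + 1, B, by omega, by omega, by push_cast; ring, ?_, ?_⟩ <;> linarith [hmem.1]
    · rw [Tmap_of_pos hpos]
      refine ⟨A, B + 1, hqA, by omega, by push_cast; ring, ?_, ?_⟩ <;> linarith [hmem.2]

end Orbit

lemma eq_of_mem_Ioo_of_add_eq {lam : ℝ} {A B A' B' : ℤ} (hx : A * lam - B ∈ Ioo (-1) lam)
    (hy : A' * lam - B' ∈ Ioo (-1) lam) (hsum : A + B = A' + B') :
    A * lam - B = A' * lam - B' := by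
  obtain ⟨c, hc⟩ : ∃ c : ℤ, A * lam - B - (A' * lam - B') = c * (lam + 1) :=
    ⟨A - A', by rw [show B = A' + B' - A by omega]; push_cast; ring⟩
  have hlam : 0 < lam + 1 := by linarith [hx.1, hx.2]
  have hc1 : (c : ℝ) < 1 := by nlinarith [hx.1, hx.2, hy.1, hy.2]
  have hc2 : (-1 : ℝ) < c := by nlinarith [hx.1, hx.2, hy.1, hy.2]
  obtain rfl : c = 0 := by
    have : c < 1 := by exact_mod_cast hc1
    have : -1 < c := by exact_mod_cast hc2
    omega
  push_cast at hc
  linarith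

theorem stmt19_general (lam : ℝ) (h : lam ∈ Set.Ioo (0 : ℝ) 1) (hirr : Irrational lam)
    (p q : ℕ) (hp : 0 < p) (hq : 0 < q)
    (eta : ℝ) (heta : eta = (p : ℝ) - (q : ℝ) * lam)
    (heta1 : -lam < eta) (heta2 : eta < 1)
    (m₀ n₀ : ℕ)
    (hmax : ∀ m n : ℕ, (n : ℤ) < cfA lam m →
      (Ps lam m n < p ∨ Qs lam m n < q) → wIdx lam m n ≤ wIdx lam m₀ n₀)
    (m n : ℕ) (hmn : (n : ℤ) < cfA lam m) (hgt : wIdx lam m₀ n₀ < wIdx lam m n) :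
    (Tmap lam eta)^[((Qs lam m n - q) + (Ps lam m n - p) + 1).toNat] 0 = Del lam m n := by
  obtain ⟨hP, hQ⟩ : (p : ℤ) ≤ Ps lam m n ∧ (q : ℤ) ≤ Qs lam m n := by
    by_contra! hc
    exact hgt.not_ge (hmax m n hmn (by omega))
  have hne : m ≠ 0 ∨ n ≠ 0 := by
    by_contra! hc
    obtain ⟨rfl, rfl⟩ := hc
    simp [Ps, num] at hP
    omega
  set t := ((Qs lam m n - q) + (Ps lam m n - p)).toNat
  obtain ⟨A, B, -, hAB, hx, hmem⟩ :=
    exists_iterate_Tmap_zero_eq h.1 hirr hq heta heta1 heta2 t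
  rw [show ((Qs lam m n - q) + (Ps lam m n - p) + 1).toNat = t + 1 by omega, hx]
  rw [hx] at hmem
  have hDel := del_mem_Ioo h hirr hmn hne
  exact_mod_cast eq_of_mem_Ioo_of_add_eq (A := A) (B := B) (by exact_mod_cast hmem) hDel
    (by omega)

/-- Let `λ ∈ (0,1)` be irrational, `η = p − qλ ∈ (−λ, 1)` with `p, q` positive integers, and let
`(m₀, n₀)` be the largest pair (in the `w_λ` ordering) with `P_{m₀,n₀} < p` or `Q_{m₀,n₀} < q`.
Then for all `(m,n)` with `0 ≤ n < λ_{m+1}` and `w_λ(m,n) > w_λ(m₀,n₀)`, one has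
`T^{h_{m,n}}(0) = Δ_{m,n}(λ)`, where `h_{m,n} = (Q_{m,n} − q) + (P_{m,n} − p) + 1`. -/
theorem stmt19 (lam : ℝ) (h : lam ∈ Set.Ioo (0 : ℝ) 1) (hirr : Irrational lam)
    (p q : ℕ) (hp : 0 < p) (hq : 0 < q)
    (eta : ℝ) (heta : eta = (p : ℝ) - (q : ℝ) * lam)
    (heta1 : -lam < eta) (heta2 : eta < 1)
    (m₀ n₀ : ℕ) (hmn₀ : (n₀ : ℤ) < cfA lam m₀)
    (h₀ : Ps lam m₀ n₀ < p ∨ Qs lam m₀ n₀ < q)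
    (hmax : ∀ m n : ℕ, (n : ℤ) < cfA lam m →
      (Ps lam m n < p ∨ Qs lam m n < q) → wIdx lam m n ≤ wIdx lam m₀ n₀)
    (m n : ℕ) (hmn : (n : ℤ) < cfA lam m) (hgt : wIdx lam m₀ n₀ < wIdx lam m n) :
    (Tmap lam eta)^[((Qs lam m n - q) + (Ps lam m n - p) + 1).toNat] 0 = Del lam m n :=
  stmt19_general lam h hirr p q hp hq eta heta heta1 heta2 m₀ n₀ hmax m n hmn hgt
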